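/- arXiv:1902.05302 — 2 statements merged into one kernel-verified Lean document; each statement's English description precedes it below -/
import Mathlib

section
/- For all integers r, D ≥ 1, the polynomial ∏_{1≤i<j≤D}(x_j−x_i)^r divides F_{r,D}(x_1,…,x_D) in ℚ[x_1,…,x_D], and the quotient G_{r,D} := F_{r,D} / ∏_{1≤i<j≤D}(x_j−x_i)^r is a symmetric polynomial of total degree at most r^2·D(D+1)/2 − r·D(D−1)/2. -/
/-!
Every entry of the matrix of `F_{r,D}` in column `(m, v)` is a fixed polynomial evaluated at
`x_v`. Subtracting column `(m, j)` from column `(m, i)` for each of the `r` values of `m` makes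
every such column divisible by `x_i - x_j`, so `(x_i - x_j)^r ∣ F`. The linear forms
`x_j - x_i` with `i < j` are pairwise non-associated irreducibles of the factorial ring
`ℚ[x_1, …, x_D]`, hence the whole product `∏ (x_j - x_i)^r` divides `F`.

A permutation `σ` of the variables permutes the `D` column blocks, which multiplies `F` by
`sgn(σ)^r`, just as it multiplies the Vandermonde product by `sgn(σ)`; so the quotient is
symmetric. An entry with row `n` and column `(m, v)` has degree at most `n + m`, so every term of
the Leibniz expansion has degree at most `∑ n + D ∑ m = r²·D(D+1)/2`, while the Vandermonde
power is homogeneous of degree `r·D(D-1)/2`.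
-/

open Nat Finset

/-- `F_{r,D}(x_1,…,x_D)`: the determinant of the rD×rD matrix whose rows are indexed
(in lexicographic order) by pairs `(i,j)`, corresponding to `n = i·D + j + 1 ∈ {1,…,rD}`,
and whose columns are indexed by pairs `(m,v)` with `0 ≤ m ≤ r−1`, `1 ≤ v ≤ D`
(ordered lexicographically), with `(n,(m,v))` entry `B_{n+m}(x_v)/(n+m)`. -/
noncomputable def Fpoly (r D : ℕ) : MvPolynomial (Fin D) ℚ :=
  Matrix.det (Matrix.of fun (p q : Fin r × Fin D) =>
    MvPolynomial.C ((((p.1 : ℕ) * D + (p.2 : ℕ) + 1 + (q.1 : ℕ) : ℕ) : ℚ))⁻¹ *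
      Polynomial.aeval (MvPolynomial.X q.2)
        (Polynomial.bernoulli ((p.1 : ℕ) * D + (p.2 : ℕ) + 1 + (q.1 : ℕ))))

/-- The Vandermonde product `∏_{1 ≤ i < j ≤ D} (x_j − x_i)`. -/
noncomputable def vand (D : ℕ) : MvPolynomial (Fin D) ℚ :=
  ∏ p ∈ Finset.univ.filter (fun p : Fin D × Fin D => p.1 < p.2),
    (MvPolynomial.X p.2 - MvPolynomial.X p.1)

/-- The rD×rD matrix with rows `n = 1,…,rD` (encoded as pairs `(i,j)`, `n = i·D+j+1`,
in lexicographic order), columns indexed by pairs `(m,v)`, `0 ≤ m ≤ r−1`, `1 ≤ v ≤ D`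
(`v` encoded as `q.2 + 1`), and `(n,(m,v))` entry `D^{n+m−1}·B_{n+m}(v/D)/(n+m)`. -/
noncomputable def deltaMat (r D : ℕ) : Matrix (Fin r × Fin D) (Fin r × Fin D) ℚ :=
  Matrix.of fun p q =>
    (D : ℚ) ^ ((p.1 : ℕ) * D + (p.2 : ℕ) + (q.1 : ℕ)) *
      (Polynomial.bernoulli ((p.1 : ℕ) * D + (p.2 : ℕ) + 1 + (q.1 : ℕ))).eval
        (((q.2 : ℕ) + 1 : ℚ) / D) /
      (((p.1 : ℕ) * D + (p.2 : ℕ) + 1 + (q.1 : ℕ) : ℕ) : ℚ)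

/-- `Δ_{r,D}`. -/
noncomputable def delta (r D : ℕ) : ℚ := (deltaMat r D).det

open scoped Polynomial


namespace Matrix

variable {n A : Type*} [Fintype n] [DecidableEq n] [CommRing A]

theorem pow_card_dvd_det_of_dvd_sub_col (d : A) (e : n → n) (s : Finset n)
    (he : ∀ c ∈ s, e c ∉ s) (M : Matrix n n A)
    (hd : ∀ c ∈ s, ∀ p, d ∣ M p c - M p (e c)) :
    d ^ s.card ∣ M.det := by
  induction s using Finset.induction_on generalizing M with
  | empty => simp
  | @insert c t hc ih =>
    choose B hB using hd c (mem_insert_self c t)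
    have hec : e c ≠ c := fun h => he c (mem_insert_self c t) (h.symm ▸ mem_insert_self c t)
    have hdet : M.det = d * (M.updateCol c B).det := by
      calc M.det = (M.updateCol c ((fun p => M p (e c)) + d • B)).det := by
            congr
            ext p q
            rcases eq_or_ne q c with rfl | hq
            · simp [← hB]
            · simp [hq]
        _ = d * (M.updateCol c B).det := by
            rw [det_updateCol_add, det_updateCol_smul, det_updateCol_eq_zero hec, zero_add]
    have hrest : d ^ t.card ∣ (M.updateCol c B).det := by
      refine ih (fun c' hc' h => he c' (mem_insert_of_mem hc') (mem_insert_of_mem h)) _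
        fun c' hc' p => ?_
      have hc'c : c' ≠ c := fun h => hc (h ▸ hc')
      have hec' : e c' ≠ c := fun h =>
        he c' (mem_insert_of_mem hc') (h.symm ▸ mem_insert_self c t)
      simpa [updateCol_ne hc'c, updateCol_ne hec'] using hd c' (mem_insert_of_mem hc') p
    rw [card_insert_of_notMem hc, _root_.pow_succ', hdet]
    exact mul_dvd_mul_left d hrest

theorem totalDegree_det_le {σ R : Type*} [CommRing R] (M : Matrix n n (MvPolynomial σ R))
    (a b : n → ℕ) (h : ∀ p q, (M p q).totalDegree ≤ a p + b q) :
    M.det.totalDegree ≤ ∑ p, a p + ∑ q, b q := by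
  rw [det_apply]
  refine (MvPolynomial.totalDegree_finsetSum _ _).trans (Finset.sup_le fun τ _ => ?_)
  rw [Units.smul_def]
  refine (MvPolynomial.totalDegree_smul_le _ _).trans <|
    (MvPolynomial.totalDegree_finsetProd _ _).trans ?_
  calc ∑ q, (M (τ q) q).totalDegree ≤ ∑ q, (a (τ q) + b q) := sum_le_sum fun q _ => h _ _
    _ = ∑ p, a p + ∑ q, b q := by rw [sum_add_distrib, Equiv.sum_comp τ a]

end Matrix

section PolyEvalMatrix

variable {κ ι R A : Type*} [CommRing R] [CommRing A] [Algebra R A]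

noncomputable def polyEvalMatrix (P : κ × ι → κ → R[X]) (x : ι → A) :
    Matrix (κ × ι) (κ × ι) A :=
  Matrix.of fun p q => Polynomial.aeval (x q.2) (P p q.1)

variable [Fintype κ] [Fintype ι] [DecidableEq κ] [DecidableEq ι]

theorem sub_pow_card_dvd_det_polyEvalMatrix (P : κ × ι → κ → R[X]) (x : ι → A) {i j : ι}
    (hij : i ≠ j) : (x i - x j) ^ Fintype.card κ ∣ (polyEvalMatrix P x).det := by
  have key := Matrix.pow_card_dvd_det_of_dvd_sub_col (x i - x j) (fun q => (q.1, j))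
    (univ ×ˢ {i}) (by simp [hij]) (polyEvalMatrix P x) fun q hq p => by
      obtain ⟨m, rfl⟩ : ∃ m, (m, i) = q := by simpa using hq
      simp only [polyEvalMatrix, Matrix.of_apply, Polynomial.aeval_def,
        Polynomial.eval₂_eq_eval_map]
      exact Polynomial.sub_dvd_eval_sub _ _ _
  simpa using key

theorem det_polyEvalMatrix_comp_perm (P : κ × ι → κ → R[X]) (x : ι → A)
    (σ : Equiv.Perm ι) :
    (polyEvalMatrix P (x ∘ σ)).det =
      ((Equiv.Perm.sign σ : ℤ) : A) ^ Fintype.card κ * (polyEvalMatrix P x).det := by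
  have hsub : polyEvalMatrix P (x ∘ σ) =
      (polyEvalMatrix P x).submatrix id (Equiv.prodCongrRight fun _ => σ) := rfl
  rw [hsub, Matrix.det_permute', Equiv.Perm.sign_prodCongrRight]
  simp

theorem det_polyEvalMatrix_map {B : Type*} [CommRing B] [Algebra R B]
    (P : κ × ι → κ → R[X]) (x : ι → A) (f : A →ₐ[R] B) :
    f (polyEvalMatrix P x).det = (polyEvalMatrix P (f ∘ x)).det := by
  rw [AlgHom.map_det]
  congr
  ext p q
  simp [polyEvalMatrix, Polynomial.aeval_algHom_apply]

end PolyEvalMatrix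

theorem sum_range_sum_range_mul_two (r D : ℕ) :
    (∑ m ∈ range r, ∑ v ∈ range D, (m * D + v + 1 + m)) * 2 = r ^ 2 * (D * (D + 1)) := by
  have hgauss : (∑ v ∈ range D, (v + 1)) * 2 = D * (D + 1) := by
    simpa [sum_range_succ', Nat.mul_comm] using sum_range_id_mul_two (D + 1)
  induction r with
  | zero => simp
  | succ r ih =>
    have hrow : ∑ v ∈ range D, (r * D + v + 1 + r) =
        D * (r * D + r) + ∑ v ∈ range D, (v + 1) := by
      rw [sum_add_distrib, sum_add_distrib, sum_add_distrib, sum_add_distrib]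
      simp only [sum_const, card_range, smul_eq_mul, mul_one]
      ring
    rw [sum_range_succ, add_mul, ih, hrow, add_mul, hgauss]
    ring

theorem sum_rowDegree_add_sum_colDegree (r D : ℕ) :
    ∑ p : Fin r × Fin D, ((p.1 : ℕ) * D + p.2 + 1) + ∑ q : Fin r × Fin D, (q.1 : ℕ) =
      r ^ 2 * (D * (D + 1) / 2) := by
  rw [← sum_add_distrib, Fintype.sum_prod_type,
    Fin.sum_univ_eq_sum_range (fun m => ∑ v : Fin D, (m * D + v + 1 + m)),
    sum_congr rfl fun m _ => Fin.sum_univ_eq_sum_range (fun v => m * D + v + 1 + m) D]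
  have hhalf : D * (D + 1) / 2 * 2 = D * (D + 1) :=
    Nat.div_two_mul_two_of_even (Nat.even_mul_succ_self D)
  have := sum_range_sum_range_mul_two r D
  nlinarith

theorem Polynomial.natDegree_bernoulli_le (n : ℕ) : (Polynomial.bernoulli n).natDegree ≤ n := by
  rw [Polynomial.bernoulli_def]
  refine Polynomial.natDegree_sum_le_of_forall_le _ _ fun k hk => ?_
  exact (Polynomial.natDegree_monomial_le _).trans (Nat.lt_succ_iff.mp (mem_range.mp hk))

open MvPolynomial

theorem MvPolynomial.totalDegree_aeval_X_le {σ R : Type*} [CommRing R] [Nontrivial R] (Q : R[X])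
    (v : σ) : (Polynomial.aeval (X v : MvPolynomial σ R) Q).totalDegree ≤ Q.natDegree := by
  rw [Polynomial.aeval_eq_sum_range]
  refine (totalDegree_finsetSum _ _).trans (Finset.sup_le fun k hk => ?_)
  refine (totalDegree_smul_le _ _).trans ?_
  rw [totalDegree_X_pow]
  exact Nat.lt_succ_iff.mp (mem_range.mp hk)

theorem MvPolynomial.irreducible_X_sub_X {σ R : Type*} [CommRing R] [IsDomain R] {i j : σ}
    (hij : i ≠ j) : Irreducible (X i - X j : MvPolynomial σ R) := by
  classical
  have hne : (X i - X j : MvPolynomial σ R) ≠ 0 := sub_ne_zero.2 fun h => hij (X_injective h)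
  refine irreducible_of_totalDegree_eq_one
    (((isHomogeneous_X R i).sub (isHomogeneous_X R j)).totalDegree hne) fun c hc => ?_
  exact isUnit_of_dvd_one <| by
    simpa [coeff_X, Finsupp.single_left_inj one_ne_zero, hij.symm] using hc (Finsupp.single i 1)

theorem MvPolynomial.mem_of_X_sub_X_dvd {σ R : Type*} [CommRing R] [Nontrivial R]
    {i j k l : σ} (hkl : k ≠ l) (h : (X i - X j : MvPolynomial σ R) ∣ X k - X l) :
    k = i ∨ k = j := by
  classical
  by_contra! hk
  simpa [Pi.single_apply, hk.1.symm, hk.2.symm, hkl.symm] using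
    map_dvd (eval (Pi.single k (1 : R))) h

theorem MvPolynomial.X_sub_X_dvd_X_sub_X {σ R : Type*} [CommRing R] [Nontrivial R]
    {i j k l : σ} (hkl : k ≠ l) (h : (X i - X j : MvPolynomial σ R) ∣ X k - X l) :
    k = i ∧ l = j ∨ k = j ∧ l = i := by
  have hl := mem_of_X_sub_X_dvd hkl.symm (by simpa [neg_sub] using h.neg_right)
  rcases mem_of_X_sub_X_dvd hkl h with rfl | rfl <;> rcases hl with rfl | rfl <;> simp_all

noncomputable def fpolyEntry (r D : ℕ) (p : Fin r × Fin D) (m : Fin r) : ℚ[X] :=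
  Polynomial.C ((((p.1 : ℕ) * D + (p.2 : ℕ) + 1 + (m : ℕ) : ℕ) : ℚ))⁻¹ *
    Polynomial.bernoulli ((p.1 : ℕ) * D + (p.2 : ℕ) + 1 + (m : ℕ))

theorem Fpoly_eq_det_polyEvalMatrix (r D : ℕ) :
    Fpoly r D = (polyEvalMatrix (fpolyEntry r D) X).det := by
  rw [Fpoly]
  congr
  ext p q
  simp [fpolyEntry, MvPolynomial.algebraMap_eq]

theorem rename_Fpoly (r D : ℕ) (σ : Equiv.Perm (Fin D)) :
    rename σ (Fpoly r D) =
      ((Equiv.Perm.sign σ : ℤ) : MvPolynomial (Fin D) ℚ) ^ r * Fpoly r D := by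
  have hX : (rename σ : MvPolynomial (Fin D) ℚ →ₐ[ℚ] _) ∘ X = X ∘ σ := by
    funext k
    simp
  rw [Fpoly_eq_det_polyEvalMatrix, det_polyEvalMatrix_map, hX, det_polyEvalMatrix_comp_perm,
    Fintype.card_fin]

theorem totalDegree_Fpoly_le (r D : ℕ) :
    (Fpoly r D).totalDegree ≤ r ^ 2 * (D * (D + 1) / 2) := by
  rw [Fpoly_eq_det_polyEvalMatrix, ← sum_rowDegree_add_sum_colDegree]
  refine Matrix.totalDegree_det_le _ _ _ fun p q => ?_
  exact (totalDegree_aeval_X_le _ _).trans <| (Polynomial.natDegree_C_mul_le _ _).trans <|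
    Polynomial.natDegree_bernoulli_le _

theorem vand_pow_dvd_Fpoly (r D : ℕ) : vand D ^ r ∣ Fpoly r D := by
  rw [vand, ← prod_pow]
  refine Finset.prod_dvd_of_isRelPrime (fun p hp q hq hpq => ?_) fun p hp => ?_
  · simp only [coe_filter, mem_univ, true_and, Set.mem_ofPred_eq] at hp hq
    refine IsRelPrime.pow <| (irreducible_X_sub_X hp.ne').isRelPrime_iff_not_dvd.2 fun h => ?_
    rcases X_sub_X_dvd_X_sub_X hq.ne' h with ⟨hsnd, hfst⟩ | ⟨hsnd, hfst⟩
    · exact hpq (Prod.ext hfst.symm hsnd.symm)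
    · exact lt_asymm hp (hfst ▸ hsnd ▸ hq)
  · simpa [Fpoly_eq_det_polyEvalMatrix] using sub_pow_card_dvd_det_polyEvalMatrix (fpolyEntry r D)
      (X : Fin D → MvPolynomial (Fin D) ℚ) (mem_filter.1 hp).2.ne'

theorem vand_eq_det_vandermonde (D : ℕ) :
    vand D = (Matrix.vandermonde (X : Fin D → MvPolynomial (Fin D) ℚ)).det := by
  rw [Matrix.det_vandermonde, vand, prod_filter, Fintype.prod_prod_type]
  refine prod_congr rfl fun i _ => ?_
  rw [← prod_filter]
  exact prod_congr (by ext; simp) fun _ _ => rfl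

theorem vand_ne_zero (D : ℕ) : vand D ≠ 0 := by
  rw [vand_eq_det_vandermonde, Matrix.det_vandermonde_ne_zero_iff]
  exact X_injective

theorem rename_vand (D : ℕ) (σ : Equiv.Perm (Fin D)) :
    rename σ (vand D) = ((Equiv.Perm.sign σ : ℤ) : MvPolynomial (Fin D) ℚ) * vand D := by
  rw [vand_eq_det_vandermonde, AlgHom.map_det, ← Matrix.det_permute]
  congr 1
  ext i j
  simp [Matrix.vandermonde]

theorem isHomogeneous_vand (D : ℕ) : (vand D).IsHomogeneous (D.choose 2) := by
  have hcard : #{p : Fin D × Fin D | p.1 < p.2} = D.choose 2 := by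
    simpa using card_product_filter_lt (s := (univ : Finset (Fin D)))
  have h := IsHomogeneous.prod (univ.filter fun p : Fin D × Fin D => p.1 < p.2)
    (fun p => (X p.2 - X p.1 : MvPolynomial (Fin D) ℚ)) (fun _ => 1)
    fun p _ => (isHomogeneous_X ℚ p.2).sub (isHomogeneous_X ℚ p.1)
  simp only [sum_const, smul_eq_mul, mul_one, hcard] at h
  exact h

theorem vandermonde_pow_dvd_F_general (r D : ℕ) :
    ∃ G : MvPolynomial (Fin D) ℚ,
      Fpoly r D = vand D ^ r * G ∧ G.IsSymmetric ∧
        G.totalDegree ≤ r ^ 2 * (D * (D + 1) / 2) - r * (D * (D - 1) / 2) := by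
  obtain ⟨G, hG⟩ := vand_pow_dvd_Fpoly r D
  have hv : vand D ^ r ≠ 0 := pow_ne_zero r (vand_ne_zero D)
  refine ⟨G, hG, fun σ => ?_, ?_⟩
  · have hsign : ((Equiv.Perm.sign σ : ℤ) : MvPolynomial (Fin D) ℚ) ^ r ≠ 0 := by simp
    have h := rename_Fpoly r D σ
    rw [hG, map_mul, map_pow, rename_vand, mul_pow, mul_assoc] at h
    exact mul_left_cancel₀ hv (mul_left_cancel₀ hsign h)
  · rcases eq_or_ne G 0 with rfl | hG0
    · simp
    have hdeg := totalDegree_Fpoly_le r D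
    rw [hG, totalDegree_mul_of_isDomain hv hG0, ((isHomogeneous_vand D).pow r).totalDegree hv,
      Nat.choose_two_right] at hdeg
    rw [mul_comm r]
    omega

/-- For all r, D ≥ 1, `∏_{i<j}(x_j−x_i)^r` divides `F_{r,D}`, and the
quotient `G_{r,D}` is a symmetric polynomial of total degree at most
`r²·D(D+1)/2 − r·D(D−1)/2`. -/
theorem vandermonde_pow_dvd_F (r D : ℕ) (hr : 1 ≤ r) (hD : 1 ≤ D) :
    ∃ G : MvPolynomial (Fin D) ℚ,
      Fpoly r D = vand D ^ r * G ∧ G.IsSymmetric ∧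
        G.totalDegree ≤ r ^ 2 * (D * (D + 1) / 2) - r * (D * (D - 1) / 2) :=
  vandermonde_pow_dvd_F_general r D
end

section
/- Let D ≥ 1 and let x_1,…,x_D be pairwise distinct rational numbers. Then Σ_{t=0}^{D} (−1)^t E_{D,D−t}(x_1,…,x_D)/(t+1) = Σ_{k=1}^{D} Σ_{ℓ=0}^{D−1} (−1)^{D−1−ℓ} · B_D(x_k) · E_{D−1,D−1−ℓ}(x_1,…,\hat{x_k},…,x_D) / ((ℓ+1)·∏_{j≠k}(x_j−x_k)), where \hat{x_k} means that x_k is omitted. -/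
/-!
Let `P = ∏ⱼ (X - xⱼ)`. Both `B_D` and `P` are monic of degree `D`, so `B_D - P` has
degree `< D`, and Lagrange interpolation at the nodes gives
`B_D - P = ∑ₖ B_D(xₖ) wₖ ∏_{j ≠ k} (X - xⱼ)` with barycentric weights
`wₖ = ∏_{j ≠ k} (xₖ - xⱼ)⁻¹`. Now integrate over `[0, 1]`: the integral of `B_D` vanishes
for `D ≥ 1` because `B_{D+1}' = (D + 1) B_D` and `B_{D+1}(1) = B_{D+1}(0)`, while by Vieta
the integral of `∏_{j ∈ S} (X - xⱼ)` is an alternating sum of `E_{|S|, ·}(x_S) / (t + 1)`.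
-/

open Nat Finset

/-- The elementary symmetric polynomial of degree k in the values `x i`, `i ∈ S`:
the sum over all k-element subsets A of S of `∏_{i ∈ A} x i`. -/
def esymmVal {D : ℕ} (S : Finset (Fin D)) (k : ℕ) (x : Fin D → ℚ) : ℚ :=
  ∑ A ∈ S.powersetCard k, ∏ i ∈ A, x i

open Polynomial Lagrange

namespace Polynomial

theorem coeff_bernoulli_self (n : ℕ) : (bernoulli n).coeff n = 1 := by
  simp [coeff_bernoulli]

theorem natDegree_bernoulli_le_s13 (n : ℕ) : (bernoulli n).natDegree ≤ n :=
  natDegree_le_iff_coeff_eq_zero.mpr fun i hi => by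
    rw [coeff_bernoulli, if_neg (by exact_mod_cast hi.not_ge)]

theorem monic_bernoulli (n : ℕ) : (bernoulli n).Monic :=
  monic_of_natDegree_le_of_coeff_eq_one n (natDegree_bernoulli_le_s13 n) (coeff_bernoulli_self n)

theorem natDegree_bernoulli (n : ℕ) : (bernoulli n).natDegree = n :=
  natDegree_eq_of_le_of_coeff_ne_zero (natDegree_bernoulli_le_s13 n)
    (by rw [coeff_bernoulli_self]; exact one_ne_zero)

end Polynomial

/-- `∫₀¹ p`, defined formally by `X ^ n ↦ 1 / (n + 1)`. -/
noncomputable def unitIntegral : ℚ[X] →ₗ[ℚ] ℚ :=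
  lsum fun n => ((n : ℚ) + 1)⁻¹ • LinearMap.id

theorem unitIntegral_monomial (n : ℕ) (a : ℚ) : unitIntegral (monomial n a) = a / (n + 1) := by
  simp [unitIntegral, div_eq_inv_mul]

theorem unitIntegral_eq_sum_range {p : ℚ[X]} {n : ℕ} (hp : p.natDegree < n) :
    unitIntegral p = ∑ i ∈ range n, p.coeff i / (i + 1) := by
  rw [unitIntegral, lsum_apply, sum_over_range' p (by simp) n hp]
  simp [div_eq_inv_mul]

theorem unitIntegral_derivative (p : ℚ[X]) :
    unitIntegral (derivative p) = p.eval 1 - p.eval 0 := by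
  induction p using Polynomial.induction_on' with
  | add p q hp hq => rw [map_add, map_add, hp, hq, eval_add, eval_add]; ring
  | monomial n a =>
    cases n with
    | zero => simp
    | succ n =>
      rw [derivative_monomial, unitIntegral_monomial, eval_monomial, eval_monomial, one_pow,
        zero_pow (succ_ne_zero n), Nat.add_sub_cancel]
      push_cast
      field_simp
      ring

theorem unitIntegral_bernoulli {n : ℕ} (hn : n ≠ 0) : unitIntegral (bernoulli n) = 0 := by
  have h := unitIntegral_derivative (bernoulli (n + 1))
  rw [derivative_bernoulli_add_one, bernoulli_eval_one, bernoulli_eval_zero,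
    bernoulli_eq_bernoulli'_of_ne_one (by omega), sub_self, ← C_eq_natCast, ← C_1, ← C_add,
    ← smul_eq_C_mul, map_smul, smul_eq_zero] at h
  exact h.resolve_left (by positivity)

namespace Lagrange

variable {F ι : Type*} [Field F] [DecidableEq ι] {s : Finset ι} {v : ι → F}

theorem sub_nodal_eq_interpolate (hvs : Set.InjOn v s) {f : F[X]} (hf : f.Monic)
    (hdeg : f.natDegree = #s) :
    f - nodal s v = interpolate s v fun i => f.eval (v i) := by
  have hlt : (f - nodal s v).degree < #s := by
    rw [← hdeg, ← degree_eq_natDegree hf.ne_zero]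
    exact degree_sub_lt_left (by rw [degree_nodal, degree_eq_natDegree hf.ne_zero, hdeg])
      hf.ne_zero (by rw [hf.leadingCoeff, nodal_monic.leadingCoeff])
  rw [eq_interpolate hvs hlt]
  refine interpolate_eq_of_values_eq_on _ _ fun i hi => ?_
  rw [eval_sub, eval_nodal_at_node hi, sub_zero]

theorem basis_eq_C_nodalWeight_mul_nodal_erase {i : ι} (hi : i ∈ s) :
    Lagrange.basis s v i = C (nodalWeight s v i) * nodal (s.erase i) v := by
  rw [basis_eq_prod_sub_inv_mul_nodal_div hi, nodal_erase_eq_nodal_div hi]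

theorem inv_prod_erase_sub {i : ι} (hi : i ∈ s) :
    (∏ j ∈ s.erase i, (v j - v i))⁻¹ = (-1) ^ (#s - 1) * nodalWeight s v i := by
  simp_rw [nodalWeight, ← neg_sub (v i), prod_neg, card_erase_of_mem hi, mul_inv,
    prod_inv_distrib, ← inv_pow, inv_neg, inv_one]

end Lagrange

theorem coeff_nodal_eq_esymmVal {D : ℕ} (S : Finset (Fin D)) (x : Fin D → ℚ) {k : ℕ}
    (hk : k ≤ #S) : (nodal S x).coeff k = (-1) ^ (#S - k) * esymmVal S (#S - k) x := by
  have h := Multiset.prod_X_sub_C_coeff (S.val.map x) (k := k) (by simpa using hk)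
  rw [Multiset.map_map, Multiset.card_map, card_val] at h
  rw [esymmVal, ← esymm_map_val, nodal, ← h]
  rfl

theorem unitIntegral_nodal {D : ℕ} (S : Finset (Fin D)) (x : Fin D → ℚ) :
    unitIntegral (nodal S x) =
      ∑ t ∈ range (#S + 1), (-1) ^ (#S - t) * esymmVal S (#S - t) x / (t + 1) := by
  rw [unitIntegral_eq_sum_range (natDegree_nodal.trans_lt (lt_add_one _))]
  refine sum_congr rfl fun t ht => ?_
  rw [coeff_nodal_eq_esymmVal S x (by simpa [Nat.lt_succ_iff] using ht)]

theorem neg_one_pow_mul_unitIntegral_nodal {D : ℕ} (S : Finset (Fin D)) (x : Fin D → ℚ) :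
    (-1) ^ #S * unitIntegral (nodal S x) =
      ∑ t ∈ range (#S + 1), (-1) ^ t * esymmVal S (#S - t) x / (t + 1) := by
  rw [unitIntegral_nodal, mul_sum]
  refine sum_congr rfl fun t ht => ?_
  have ht : t ≤ #S := Nat.lt_succ_iff.mp (mem_range.mp ht)
  have hsign : (-1 : ℚ) ^ #S * (-1) ^ (#S - t) = (-1) ^ t := by
    rw [← pow_add, show #S + (#S - t) = 2 * (#S - t) + t by omega, pow_add, pow_mul, neg_one_sq,
      one_pow, one_mul]
  rw [← hsign]
  ring

theorem unitIntegral_nodal_eq_neg_sum {ι : Type*} [DecidableEq ι] {s : Finset ι} {v : ι → ℚ}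
    (hvs : Set.InjOn v s) (hs : #s ≠ 0) :
    unitIntegral (nodal s v) = -∑ i ∈ s, (Polynomial.bernoulli #s).eval (v i) *
      nodalWeight s v i * unitIntegral (nodal (s.erase i) v) := by
  have h := congrArg unitIntegral
    (sub_nodal_eq_interpolate hvs (monic_bernoulli #s) (natDegree_bernoulli #s))
  rw [map_sub, unitIntegral_bernoulli hs, zero_sub, interpolate_apply, map_sum] at h
  rw [← neg_eq_iff_eq_neg, h]
  refine sum_congr rfl fun i hi => ?_
  rw [basis_eq_C_nodalWeight_mul_nodal_erase hi, ← mul_assoc, ← C_mul, ← smul_eq_C_mul,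
    map_smul, smul_eq_mul]

/-- For D ≥ 1 and pairwise distinct rationals x_1,…,x_D,
`Σ_{t=0}^{D} (−1)^t E_{D,D−t}(x_1,…,x_D)/(t+1)
  = Σ_{k=1}^{D} Σ_{ℓ=0}^{D−1} (−1)^{D−1−ℓ}·B_D(x_k)·E_{D−1,D−1−ℓ}(x_1,…,x̂_k,…,x_D)
      /((ℓ+1)·∏_{j≠k}(x_j−x_k))`. -/
theorem esymm_bernoulli_identity (D : ℕ) (hD : 1 ≤ D) (x : Fin D → ℚ)
    (hx : Function.Injective x) :
    ∑ t ∈ Finset.range (D + 1),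
        (-1 : ℚ) ^ t * esymmVal Finset.univ (D - t) x / ((t : ℚ) + 1) =
      ∑ k : Fin D, ∑ ℓ ∈ Finset.range D,
        (-1 : ℚ) ^ (D - 1 - ℓ) * (Polynomial.bernoulli D).eval (x k) *
          esymmVal (Finset.univ.erase k) (D - 1 - ℓ) x /
          (((ℓ : ℚ) + 1) * ∏ j ∈ Finset.univ.erase k, (x j - x k)) := by
  have hcard : #(univ : Finset (Fin D)) = D := card_fin D
  have hinterp := unitIntegral_nodal_eq_neg_sum hx.injOn (s := univ) (by omega)
  have hlhs := neg_one_pow_mul_unitIntegral_nodal (univ : Finset (Fin D)) x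
  rw [hcard] at hinterp hlhs
  have hrhs : ∀ k : Fin D, ∑ ℓ ∈ range D,
      (-1 : ℚ) ^ (D - 1 - ℓ) * (Polynomial.bernoulli D).eval (x k) *
        esymmVal (univ.erase k) (D - 1 - ℓ) x /
          (((ℓ : ℚ) + 1) * ∏ j ∈ univ.erase k, (x j - x k)) =
      (-1) ^ (D - 1) * ((Polynomial.bernoulli D).eval (x k) * nodalWeight univ x k *
        unitIntegral (nodal (univ.erase k) x)) := by
    intro k
    rw [unitIntegral_nodal, card_erase_of_mem (mem_univ k), hcard, Nat.sub_add_cancel hD,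
      mul_sum, mul_sum]
    refine sum_congr rfl fun ℓ _ => ?_
    rw [div_eq_mul_inv, mul_inv, inv_prod_erase_sub (mem_univ k), hcard]
    ring
  have hsign : (-1 : ℚ) ^ (D - 1) = -(-1) ^ D := by
    conv_rhs => rw [← Nat.sub_add_cancel hD, pow_succ]
    ring
  rw [← hlhs, sum_congr rfl fun k _ => hrhs k, ← mul_sum, hinterp, hsign]
  ring
end
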